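/- If (P, L) is an unassigned crease pattern with orthogonal paper P and L the set of axis-aligned lines supporting the creases, and R is the bounding box of P, then (P, L) is infinite all-layers simply foldable if (R, L) is: any legal folding sequence of (R, L) restricts to a legal folding sequence of (P, L). -/

import Mathlib

/-- An axis for an infinite all-layers simple fold: `vert` tells whether the
fold line is vertical, `keepLow` tells which closed side stays put, and `a`
is the coordinate of the line. -/
structure FoldAxis where
  vert : Bool
  keepLow : Bool
  a : ℝ

/-- The (infinite) fold line of an axis. -/
def axisLine (ax : FoldAxis) : Set (ℝ × ℝ) :=
  {p | (if ax.vert then p.1 else p.2) = ax.a}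

open Classical in
/-- The fold map: points of the kept closed half-plane stay put, the others
are reflected across the fold line. -/
noncomputable def foldMap (ax : FoldAxis) (p : ℝ × ℝ) : ℝ × ℝ :=
  if (if ax.keepLow then (if ax.vert then p.1 else p.2) ≤ ax.a
      else ax.a ≤ (if ax.vert then p.1 else p.2)) then p
  else if ax.vert then (2 * ax.a - p.1, p.2) else (p.1, 2 * ax.a - p.2)

/-- The creases of the instance `(Q, Lv, Lh)`: the intersection of the paper
`Q` with the vertical lines with coordinates in `Lv` and the horizontal lines
with coordinates in `Lh`. -/
def lineCreases (Q : Set (ℝ × ℝ)) (Lv Lh : Finset ℝ) : Set (ℝ × ℝ) :=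
  Q ∩ ({p : ℝ × ℝ | p.1 ∈ Lv} ∪ {p : ℝ × ℝ | p.2 ∈ Lh})

/-- Legality of an infinite all-layers simple fold of the unassigned instance
`(Q, Lv, Lh)` along `ax`: the fold line is one of the crease lines, it meets
the paper only in creases or boundary, and no crease point is brought onto a
facet point. -/
def LegalFoldL (Q : Set (ℝ × ℝ)) (Lv Lh : Finset ℝ) (ax : FoldAxis) : Prop :=
  (ax.a ∈ (if ax.vert then Lv else Lh)) ∧
  (axisLine ax ∩ Q ⊆ lineCreases Q Lv Lh ∪ frontier Q) ∧
  ∀ p ∈ lineCreases Q Lv Lh, ∀ q ∈ Q, q ∉ lineCreases Q Lv Lh →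
    q ∉ frontier Q → foldMap ax p ≠ foldMap ax q

open Classical in
/-- The crease lines after a fold: the fold line itself is used up, lines
parallel to it are reflected if they lie on the moving side (overlapping lines
merge in the `Finset`), and perpendicular lines are unchanged. -/
noncomputable def foldLines (ax : FoldAxis) (coordVert : Bool) (L : Finset ℝ) :
    Finset ℝ :=
  if ax.vert = coordVert then
    (L.erase ax.a).image fun c =>
      if (if ax.keepLow then c ≤ ax.a else ax.a ≤ c) then c else 2 * ax.a - c
  else L

/-- Every fold in the sequence of axes is legal. -/
def ChainLegalL : List FoldAxis → Set (ℝ × ℝ) → Finset ℝ → Finset ℝ → Prop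
  | [], _, _, _ => True
  | ax :: rest, Q, Lv, Lh =>
      LegalFoldL Q Lv Lh ax ∧
        ChainLegalL rest (foldMap ax '' Q) (foldLines ax true Lv)
          (foldLines ax false Lh)

/-- The instance resulting from a sequence of folds. -/
noncomputable def runFoldsL :
    List FoldAxis → Set (ℝ × ℝ) → Finset ℝ → Finset ℝ →
      Set (ℝ × ℝ) × Finset ℝ × Finset ℝ
  | [], Q, Lv, Lh => (Q, Lv, Lh)
  | ax :: rest, Q, Lv, Lh =>
      runFoldsL rest (foldMap ax '' Q) (foldLines ax true Lv)
        (foldLines ax false Lh)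

/-- `(Q, Lv, Lh)` is infinite all-layers simply foldable: some sequence of
legal folds uses up all crease lines. -/
def FoldableL (Q : Set (ℝ × ℝ)) (Lv Lh : Finset ℝ) : Prop :=
  ∃ axes : List FoldAxis, ChainLegalL axes Q Lv Lh ∧
    (runFoldsL axes Q Lv Lh).2.1 = ∅ ∧ (runFoldsL axes Q Lv Lh).2.2 = ∅

lemma legal_mono {P R : Set (ℝ × ℝ)} {Lv Lh : Finset ℝ} (hPR : P ⊆ R)
    (ax : FoldAxis) (h : LegalFoldL R Lv Lh ax) : LegalFoldL P Lv Lh ax := by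
  obtain ⟨h1, h2, h3⟩ := h
  refine ⟨h1, ?_, ?_⟩
  · intro p hp
    have hpR : p ∈ axisLine ax ∩ R := ⟨hp.1, hPR hp.2⟩
    rcases h2 hpR with hc | hf
    · exact Or.inl ⟨hp.2, hc.2⟩
    · by_cases hi : p ∈ interior P
      · exact absurd (interior_mono hPR hi) hf.2
      · exact Or.inr ⟨subset_closure hp.2, hi⟩
  · intro p hp q hq hqc hqf
    have hpR : p ∈ lineCreases R Lv Lh := ⟨hPR hp.1, hp.2⟩
    have hqR : q ∈ R := hPR hq
    have hqcR : q ∉ lineCreases R Lv Lh := fun hc => hqc ⟨hq, hc.2⟩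
    have hqi : q ∈ interior P := by
      by_contra hi
      exact hqf ⟨subset_closure hq, hi⟩
    have hqfR : q ∉ frontier R := fun hf => hf.2 (interior_mono hPR hqi)
    exact h3 p hpR q hqR hqcR hqfR

lemma chain_mono {P R : Set (ℝ × ℝ)} (hPR : P ⊆ R) :
    ∀ (axes : List FoldAxis) (Lv Lh : Finset ℝ),
      ChainLegalL axes R Lv Lh → ChainLegalL axes P Lv Lh := by
  intro axes
  induction axes generalizing P R with
  | nil => intro _ _ _; trivial
  | cons ax rest ih =>
      intro Lv Lh h
      exact ⟨legal_mono hPR ax h.1,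
        ih (Set.image_mono hPR) _ _ h.2⟩

lemma run_snd (axes : List FoldAxis) :
    ∀ (Q Q' : Set (ℝ × ℝ)) (Lv Lh : Finset ℝ),
      (runFoldsL axes Q Lv Lh).2 = (runFoldsL axes Q' Lv Lh).2 := by
  induction axes with
  | nil => intro _ _ _ _; rfl
  | cons ax rest ih => intro Q Q' Lv Lh; exact ih _ _ _ _

/-- If `P` is an orthogonal piece of paper contained in its bounding box `R`
and `Lv, Lh` are the axis-aligned lines supporting the (unassigned) creases,
then any legal folding sequence of `(R, L)` restricts to a legal folding
sequence of `(P, L)`; consequently `(P, L)` is infinite all-layers simply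
foldable if `(R, L)` is. -/
theorem foldable_of_boundingBox_foldable
    (P R : Set (ℝ × ℝ)) (Lv Lh : Finset ℝ) (hPR : P ⊆ R) :
    (∀ axes : List FoldAxis, ChainLegalL axes R Lv Lh → ChainLegalL axes P Lv Lh) ∧
    (FoldableL R Lv Lh → FoldableL P Lv Lh) := by
  refine ⟨fun axes h => chain_mono hPR axes Lv Lh h, ?_⟩
  rintro ⟨axes, hc, hv, hh⟩
  refine ⟨axes, chain_mono hPR axes Lv Lh hc, ?_, ?_⟩
  · rw [show (runFoldsL axes P Lv Lh).2 = (runFoldsL axes R Lv Lh).2 from run_snd axes P R Lv Lh]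
    exact hv
  · rw [show (runFoldsL axes P Lv Lh).2 = (runFoldsL axes R Lv Lh).2 from run_snd axes P R Lv Lh]
    exact hh
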